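/- arXiv:2405.03508 — 2 statements merged into one kernel-verified Lean document; each statement's English description precedes it below -/
import Mathlib

section
/- The field extensions k(𝒪)|k(x), k(𝒪)|k(y) and k(𝒪)|k(x,y) are Galois extensions (algebraic extensions whose field of elements fixed by all automorphisms over the base equals the base field). -/
open IntermediateField
open scoped BigOperators Classical

set_option synthInstance.maxHeartbeats 1000000
set_option maxHeartbeats 1600000

noncomputable section

namespace QuadrantWalk

variable {K : Type} [Field K] [Algebra ℂ K]

/-- Evaluation of the step (Laurent) polynomial `S(X,Y) = ∑ w_{i,j} X^i Y^j`
    at a pair of elements of a field. -/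
def stepEval (St : Finset (ℤ × ℤ)) (w : ℤ × ℤ → ℂ) (u v : K) : K :=
  ∑ p ∈ St, algebraMap ℂ K (w p) * u ^ p.1 * v ^ p.2

/-- The step polynomial involves both `X` and `Y`. -/
def NotUnivariate (St : Finset (ℤ × ℤ)) : Prop :=
  (∃ p ∈ St, ∃ q ∈ St, p.1 ≠ q.1) ∧ ∃ p ∈ St, ∃ q ∈ St, p.2 ≠ q.2

/-- The kernel polynomial `K̃(X,Y,t) = X^mx * Y^my * (1 - t·S(X,Y))` as an element of
`ℂ[X,Y,t]`, with variables `0 ↦ X`, `1 ↦ Y`, `2 ↦ t`. -/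
def kernelPoly (St : Finset (ℤ × ℤ)) (w : ℤ × ℤ → ℂ) (mx my : ℕ) :
    MvPolynomial (Fin 3) ℂ :=
  MvPolynomial.X 0 ^ mx * MvPolynomial.X 1 ^ my -
    MvPolynomial.X 2 *
      ∑ p ∈ St, MvPolynomial.C (w p) *
        MvPolynomial.X 0 ^ (p.1 + (mx : ℤ)).toNat *
        MvPolynomial.X 1 ^ (p.2 + (my : ℤ)).toNat

/-- `-mx` (resp. `-my`) is the smallest `X`-exponent (resp. `Y`-exponent) of the model. -/
structure ExponentBounds (St : Finset (ℤ × ℤ)) (mx my : ℕ) : Prop where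
  lowerX : ∀ p ∈ St, -(mx : ℤ) ≤ p.1
  lowerY : ∀ p ∈ St, -(my : ℤ) ≤ p.2
  attainX : ∃ p ∈ St, p.1 = -(mx : ℤ)
  attainY : ∃ p ∈ St, p.2 = -(my : ℤ)

/-- `x`-adjacency : equal first coordinates and equal values of `S`. -/
def XAdj (St : Finset (ℤ × ℤ)) (w : ℤ × ℤ → ℂ) (a b : K × K) : Prop :=
  a.1 = b.1 ∧ stepEval St w a.1 a.2 = stepEval St w b.1 b.2

/-- `y`-adjacency : equal second coordinates and equal values of `S`. -/
def YAdj (St : Finset (ℤ × ℤ)) (w : ℤ × ℤ → ℂ) (a b : K × K) : Prop :=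
  a.2 = b.2 ∧ stepEval St w a.1 a.2 = stepEval St w b.1 b.2

/-- Adjacency. -/
def Adj (St : Finset (ℤ × ℤ)) (w : ℤ × ℤ → ℂ) (a b : K × K) : Prop :=
  XAdj St w a b ∨ YAdj St w a b

/-- The orbit of the walk: the equivalence class of `(x,y)` under the
reflexive-transitive closure of adjacency. -/
def orbit (St : Finset (ℤ × ℤ)) (w : ℤ × ℤ → ℂ) (x y : K) : Set (K × K) :=
  {a | Relation.ReflTransGen (Adj St w) (x, y) a}

/-- `k = ℂ(S(x,y))`. -/
def kF (St : Finset (ℤ × ℤ)) (w : ℤ × ℤ → ℂ) (x y : K) : IntermediateField ℂ K :=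
  adjoin ℂ {stepEval St w x y}

/-- `k(x) = ℂ(x, S(x,y))`. -/
def kxF (St : Finset (ℤ × ℤ)) (w : ℤ × ℤ → ℂ) (x y : K) : IntermediateField ℂ K :=
  adjoin ℂ {x, stepEval St w x y}

/-- `k(y) = ℂ(y, S(x,y))`. -/
def kyF (St : Finset (ℤ × ℤ)) (w : ℤ × ℤ → ℂ) (x y : K) : IntermediateField ℂ K :=
  adjoin ℂ {y, stepEval St w x y}

/-- `k(x,y) = ℂ(x,y)`. -/
def kxyF (x y : K) : IntermediateField ℂ K := adjoin ℂ {x, y}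

/-- `k(𝒪)`: the subfield generated over `k` by all coordinates of the orbit. -/
def orbitF (St : Finset (ℤ × ℤ)) (w : ℤ × ℤ → ℂ) (x y : K) : IntermediateField ℂ K :=
  adjoin ℂ ({stepEval St w x y} ∪ {z | ∃ a ∈ orbit St w x y, z = a.1 ∨ z = a.2})

/-- The standing hypotheses: nonzero weights, a non-univariate step polynomial,
`x, y` algebraically independent over `ℂ`, and `𝕂` an algebraic closure of `ℂ(x,y)`. -/
structure Setting (St : Finset (ℤ × ℤ)) (w : ℤ × ℤ → ℂ) (x y : K) : Prop where
  weight_ne : ∀ p ∈ St, w p ≠ 0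
  notUniv : NotUnivariate St
  indep : AlgebraicIndependent ℂ ![x, y]
  algClosed : IsAlgClosed K
  algebraic : Algebra.IsAlgebraic (kxyF x y) K

lemma self_mem_orbit (St : Finset (ℤ × ℤ)) (w : ℤ × ℤ → ℂ) (x y : K) :
    (x, y) ∈ orbit St w x y := Relation.ReflTransGen.refl

lemma x_mem_orbitF (St : Finset (ℤ × ℤ)) (w : ℤ × ℤ → ℂ) (x y : K) :
    x ∈ orbitF St w x y := by
  apply subset_adjoin
  exact Set.mem_union_right _ ⟨(x, y), self_mem_orbit St w x y, Or.inl rfl⟩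

lemma y_mem_orbitF (St : Finset (ℤ × ℤ)) (w : ℤ × ℤ → ℂ) (x y : K) :
    y ∈ orbitF St w x y := by
  apply subset_adjoin
  exact Set.mem_union_right _ ⟨(x, y), self_mem_orbit St w x y, Or.inr rfl⟩

lemma S_mem_orbitF (St : Finset (ℤ × ℤ)) (w : ℤ × ℤ → ℂ) (x y : K) :
    stepEval St w x y ∈ orbitF St w x y := by
  apply subset_adjoin
  exact Set.mem_union_left _ rfl

lemma x_mem_kxF (St : Finset (ℤ × ℤ)) (w : ℤ × ℤ → ℂ) (x y : K) :
    x ∈ kxF St w x y :=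
  subset_adjoin ℂ _ (Set.mem_insert _ _)

lemma S_mem_kxF (St : Finset (ℤ × ℤ)) (w : ℤ × ℤ → ℂ) (x y : K) :
    stepEval St w x y ∈ kxF St w x y :=
  subset_adjoin ℂ _ (Set.mem_insert_of_mem _ rfl)

lemma y_mem_kyF (St : Finset (ℤ × ℤ)) (w : ℤ × ℤ → ℂ) (x y : K) :
    y ∈ kyF St w x y :=
  subset_adjoin ℂ _ (Set.mem_insert _ _)

lemma S_mem_kyF (St : Finset (ℤ × ℤ)) (w : ℤ × ℤ → ℂ) (x y : K) :
    stepEval St w x y ∈ kyF St w x y :=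
  subset_adjoin ℂ _ (Set.mem_insert_of_mem _ rfl)

/-- The subgroup of `ℂ`-automorphisms of `M` fixing the subfield `E` pointwise. -/
def fixingAuts (E M : IntermediateField ℂ K) : Subgroup (↥M ≃ₐ[ℂ] ↥M) where
  carrier := {σ | ∀ (z : K) (_ : z ∈ E) (hzM : z ∈ M), σ ⟨z, hzM⟩ = ⟨z, hzM⟩}
  one_mem' := fun _ _ _ => rfl
  mul_mem' := by
    intro σ τ hσ hτ z hzE hzM
    show σ (τ ⟨z, hzM⟩) = ⟨z, hzM⟩
    rw [hτ z hzE hzM, hσ z hzE hzM]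
  inv_mem' := by
    intro σ hσ z hzE hzM
    show σ.symm ⟨z, hzM⟩ = ⟨z, hzM⟩
    conv_lhs => rw [← hσ z hzE hzM]
    exact σ.symm_apply_apply _

/-- The Galois group `G_x = Gal(k(𝒪)|k(x))`. -/
def Gx (St : Finset (ℤ × ℤ)) (w : ℤ × ℤ → ℂ) (x y : K) :
    Subgroup (↥(orbitF St w x y) ≃ₐ[ℂ] ↥(orbitF St w x y)) :=
  fixingAuts (kxF St w x y) (orbitF St w x y)

/-- The Galois group `G_y = Gal(k(𝒪)|k(y))`. -/
def Gy (St : Finset (ℤ × ℤ)) (w : ℤ × ℤ → ℂ) (x y : K) :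
    Subgroup (↥(orbitF St w x y) ≃ₐ[ℂ] ↥(orbitF St w x y)) :=
  fixingAuts (kyF St w x y) (orbitF St w x y)

/-- The Galois group `G_{xy} = Gal(k(𝒪)|k(x,y))`. -/
def Gxy (St : Finset (ℤ × ℤ)) (w : ℤ × ℤ → ℂ) (x y : K) :
    Subgroup (↥(orbitF St w x y) ≃ₐ[ℂ] ↥(orbitF St w x y)) :=
  fixingAuts (kxyF x y) (orbitF St w x y)

/-- Extend an automorphism of an intermediate field to a map on all of `K`
(by the identity outside). -/
def extendAut {M : IntermediateField ℂ K} (σ : ↥M ≃ₐ[ℂ] ↥M) (z : K) : K :=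
  if h : z ∈ M then (σ ⟨z, h⟩ : K) else z

/-- The coordinate-wise action of an automorphism on a `0`-chain. -/
def actChain {M : IntermediateField ℂ K} (σ : ↥M ≃ₐ[ℂ] ↥M)
    (γ : (K × K) →₀ ℂ) : (K × K) →₀ ℂ :=
  Finsupp.mapDomain (Prod.map (extendAut σ) (extendAut σ)) γ

/-- Evaluation of a polynomial `P(X,Y,t)` at `(u, v, 1/S(x,y))` for `(u,v) = a`. -/
def evalPt (St : Finset (ℤ × ℤ)) (w : ℤ × ℤ → ℂ) (x y : K)
    (P : MvPolynomial (Fin 3) ℂ) (a : K × K) : K :=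
  MvPolynomial.aeval ![a.1, a.2, (stepEval St w x y)⁻¹] P

/-- Evaluation of a polynomial `P(X,Y,t)` at `(x, y, 1/S(x,y))`. -/
def evalXY (St : Finset (ℤ × ℤ)) (w : ℤ × ℤ → ℂ) (x y : K)
    (P : MvPolynomial (Fin 3) ℂ) : K :=
  evalPt St w x y P (x, y)

/-- Evaluation of the fraction `A/B` at `(a.1, a.2, 1/S(x,y))`. -/
def fracEval (St : Finset (ℤ × ℤ)) (w : ℤ × ℤ → ℂ) (x y : K)
    (A B : MvPolynomial (Fin 3) ℂ) (a : K × K) : K :=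
  evalPt St w x y A a / evalPt St w x y B a

/-- Evaluation (orbit sum) of the fraction `A/B` on a `0`-chain. -/
def chainEval (St : Finset (ℤ × ℤ)) (w : ℤ × ℤ → ℂ) (x y : K)
    (A B : MvPolynomial (Fin 3) ℂ) (γ : (K × K) →₀ ℂ) : K :=
  γ.sum fun a c => algebraMap ℂ K c * fracEval St w x y A B a

/-- A `0`-chain cancels decoupled fractions: the orbit sum of every regular fraction
of the form `F(X,t) + G(Y,t)` on it vanishes. -/
def CancelsDecoupled (St : Finset (ℤ × ℤ)) (w : ℤ × ℤ → ℂ) (mx my : ℕ)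
    (x y : K) (α : (K × K) →₀ ℂ) : Prop :=
  ∀ A₁ B₁ A₂ B₂ : MvPolynomial (Fin 3) ℂ,
    A₁ ∈ MvPolynomial.supported ℂ ({0, 2} : Set (Fin 3)) →
    B₁ ∈ MvPolynomial.supported ℂ ({0, 2} : Set (Fin 3)) →
    A₂ ∈ MvPolynomial.supported ℂ ({1, 2} : Set (Fin 3)) →
    B₂ ∈ MvPolynomial.supported ℂ ({1, 2} : Set (Fin 3)) →
    ¬ kernelPoly St w mx my ∣ B₁ → ¬ kernelPoly St w mx my ∣ B₂ →
    (α.sum fun a c =>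
      algebraMap ℂ K c * (fracEval St w x y A₁ B₁ a + fracEval St w x y A₂ B₂ a)) = 0

/-- The field of fractions `ℂ(X,Y,t)`. -/
abbrev FF : Type := FractionRing (MvPolynomial (Fin 3) ℂ)

/-- The inclusion of `ℂ[X,Y,t]` into `ℂ(X,Y,t)`. -/
def toFF (P : MvPolynomial (Fin 3) ℂ) : FF := algebraMap (MvPolynomial (Fin 3) ℂ) FF P

/-- The regular fraction `A/B` admits a Galois decoupling:
`A/B = F + G + K̃·R` with `F ∈ ℂ(X,t)`, `G ∈ ℂ(Y,t)` and `R` regular. -/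
def AdmitsDecoupling (St : Finset (ℤ × ℤ)) (w : ℤ × ℤ → ℂ) (mx my : ℕ)
    (A B : MvPolynomial (Fin 3) ℂ) : Prop :=
  ∃ F₁ F₂ G₁ G₂ R₁ R₂ : MvPolynomial (Fin 3) ℂ,
    F₁ ∈ MvPolynomial.supported ℂ ({0, 2} : Set (Fin 3)) ∧
    F₂ ∈ MvPolynomial.supported ℂ ({0, 2} : Set (Fin 3)) ∧
    G₁ ∈ MvPolynomial.supported ℂ ({1, 2} : Set (Fin 3)) ∧
    G₂ ∈ MvPolynomial.supported ℂ ({1, 2} : Set (Fin 3)) ∧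
    ¬ kernelPoly St w mx my ∣ F₂ ∧ ¬ kernelPoly St w mx my ∣ G₂ ∧
    ¬ kernelPoly St w mx my ∣ R₂ ∧
    toFF A / toFF B =
      toFF F₁ / toFF F₂ + toFF G₁ / toFF G₂ +
        toFF (kernelPoly St w mx my) * (toFF R₁ / toFF R₂)

/-- `(I, J) = (A/B, Cc/D)` is a pair of Galois invariants: `I - J = K̃·R` with `R` regular. -/
def IsInvariantPair (St : Finset (ℤ × ℤ)) (w : ℤ × ℤ → ℂ) (mx my : ℕ)
    (A B Cc D : MvPolynomial (Fin 3) ℂ) : Prop :=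
  ∃ R₁ R₂ : MvPolynomial (Fin 3) ℂ, ¬ kernelPoly St w mx my ∣ R₂ ∧
    toFF A / toFF B - toFF Cc / toFF D =
      toFF (kernelPoly St w mx my) * (toFF R₁ / toFF R₂)

/-- A constant pair of Galois invariants: both members are equivalent to a
common fraction `c ∈ ℂ(t)` modulo `K̃`. -/
def IsConstantPair (St : Finset (ℤ × ℤ)) (w : ℤ × ℤ → ℂ) (mx my : ℕ)
    (A B Cc D : MvPolynomial (Fin 3) ℂ) : Prop :=
  IsInvariantPair St w mx my A B Cc D ∧
  ∃ c₁ c₂ : MvPolynomial (Fin 3) ℂ,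
    c₁ ∈ MvPolynomial.supported ℂ ({2} : Set (Fin 3)) ∧
    c₂ ∈ MvPolynomial.supported ℂ ({2} : Set (Fin 3)) ∧ c₂ ≠ 0 ∧
    IsInvariantPair St w mx my A B c₁ c₂ ∧ IsInvariantPair St w mx my Cc D c₁ c₂

/-- `(γx, γy)` is a pseudo-decoupling of `(x,y)`. -/
def PseudoDecoupling (St : Finset (ℤ × ℤ)) (w : ℤ × ℤ → ℂ) (mx my : ℕ)
    (x y : K) (γx γy : (K × K) →₀ ℂ) : Prop :=
  ∀ A B : MvPolynomial (Fin 3) ℂ, ¬ kernelPoly St w mx my ∣ B →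
    AdmitsDecoupling St w mx my A B →
      fracEval St w x y A B (x, y) =
          chainEval St w x y A B γx + chainEval St w x y A B γy ∧
        chainEval St w x y A B γx ∈ kxF St w x y ∧
        chainEval St w x y A B γy ∈ kyF St w x y

/-- `(gx, gy, a)` is a decoupling of `(x,y)` in the orbit. -/
def IsDecoupling (St : Finset (ℤ × ℤ)) (w : ℤ × ℤ → ℂ) (mx my : ℕ)
    (x y : K) (gx gy a : (K × K) →₀ ℂ) : Prop :=
  Finsupp.single (x, y) (1 : ℂ) = gx + gy + a ∧
  (∀ σ ∈ Gx St w x y, actChain σ gx = gx) ∧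
  (∀ σ ∈ Gy St w x y, actChain σ gy = gy) ∧
  CancelsDecoupled St w mx my x y a

/-- The `x`-part of the boundary of a `1`-chain. -/
def boundaryX (St : Finset (ℤ × ℤ)) (w : ℤ × ℤ → ℂ)
    (c : ((K × K) × (K × K)) →₀ ℂ) : (K × K) →₀ ℂ :=
  c.sum fun e coeff =>
    if XAdj St w e.1 e.2 then
      coeff • (Finsupp.single e.2 (1 : ℂ) - Finsupp.single e.1 (1 : ℂ)) else 0

/-- The `y`-part of the boundary of a `1`-chain. -/
def boundaryY (St : Finset (ℤ × ℤ)) (w : ℤ × ℤ → ℂ)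
    (c : ((K × K) × (K × K)) →₀ ℂ) : (K × K) →₀ ℂ :=
  c.sum fun e coeff =>
    if YAdj St w e.1 e.2 then
      coeff • (Finsupp.single e.2 (1 : ℂ) - Finsupp.single e.1 (1 : ℂ)) else 0

/-- The `0`-chain induced by a bicolored loop. -/
def IsBicoloredChain (St : Finset (ℤ × ℤ)) (w : ℤ × ℤ → ℂ) (x y : K)
    (α : (K × K) →₀ ℂ) : Prop :=
  ∃ (n : ℕ) (b : ℕ → K × K), 0 < n ∧ b (2 * n) = b 0 ∧
    (∀ j < 2 * n, b j ∈ orbit St w x y) ∧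
    (∀ i < n, XAdj St w (b (2 * i)) (b (2 * i + 1)) ∧
      YAdj St w (b (2 * i + 1)) (b (2 * i + 2))) ∧
    α = ∑ j ∈ Finset.range (2 * n), ((-1 : ℂ) ^ (j + 1)) • Finsupp.single (b j) (1 : ℂ)

/-- The `0`-chain `ω = (1/|𝒪|) ∑_{a ∈ 𝒪} a`. -/
def omegaChain (St : Finset (ℤ × ℤ)) (w : ℤ × ℤ → ℂ) (x y : K)
    (h : (orbit St w x y).Finite) : (K × K) →₀ ℂ :=
  ((h.toFinset.card : ℂ))⁻¹ • ∑ a ∈ h.toFinset, Finsupp.single a (1 : ℂ)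

/-- The average `[G]·γ = (1/|G|) ∑_{σ ∈ G} σ·γ` of a `0`-chain under a group. -/
def groupAverage {M : IntermediateField ℂ K} (G : Subgroup (↥M ≃ₐ[ℂ] ↥M))
    (γ : (K × K) →₀ ℂ) : (K × K) →₀ ℂ :=
  ((Nat.card G : ℂ))⁻¹ • ∑ᶠ σ ∈ (G : Set (↥M ≃ₐ[ℂ] ↥M)), actChain σ γ

/-- `ℂ[X,t]` (two variables: `0` and `1`). -/
abbrev MvP2 : Type := MvPolynomial (Fin 2) ℂ

/-- `ℂ(X,t)`, the fraction field of `ℂ[X,t]`. -/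
abbrev CXt : Type := FractionRing MvP2

/-- Constants `ℂ → ℂ(X,t)`. -/
def cconst : ℂ →+* CXt := (algebraMap MvP2 CXt).comp (MvPolynomial.C)

/-- The first generator of `ℂ(X,t)`. -/
def gen0 : CXt := algebraMap MvP2 CXt (MvPolynomial.X 0)

/-- The second generator of `ℂ(X,t)`. -/
def gen1 : CXt := algebraMap MvP2 CXt (MvPolynomial.X 1)

/-- The kernel polynomial viewed as a polynomial in `Y` over `ℂ(X,t)`. -/
def kernelInY (St : Finset (ℤ × ℤ)) (w : ℤ × ℤ → ℂ) (mx my : ℕ) :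
    Polynomial CXt :=
  MvPolynomial.eval₂ ((Polynomial.C : CXt →+* Polynomial CXt).comp cconst)
    ![Polynomial.C gen0, Polynomial.X, Polynomial.C gen1]
    (kernelPoly St w mx my)

/-- The kernel polynomial viewed as a polynomial in `X` over `ℂ(Y,t)`. -/
def kernelInX (St : Finset (ℤ × ℤ)) (w : ℤ × ℤ → ℂ) (mx my : ℕ) :
    Polynomial CXt :=
  MvPolynomial.eval₂ ((Polynomial.C : CXt →+* Polynomial CXt).comp cconst)
    ![Polynomial.X, Polynomial.C gen0, Polynomial.C gen1]
    (kernelPoly St w mx my)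

/-- The kernel polynomial viewed as a polynomial in `X, Y` over `ℂ(t)`. -/
def kernelInXY (St : Finset (ℤ × ℤ)) (w : ℤ × ℤ → ℂ) (mx my : ℕ) :
    MvPolynomial (Fin 2) (RatFunc ℂ) :=
  MvPolynomial.eval₂
    ((MvPolynomial.C : RatFunc ℂ →+* MvPolynomial (Fin 2) (RatFunc ℂ)).comp
      (RatFunc.C : ℂ →+* RatFunc ℂ))
    ![MvPolynomial.X 0, MvPolynomial.X 1, MvPolynomial.C RatFunc.X]
    (kernelPoly St w mx my)

/-- The specialization `K̃(x, Y, 1/S(x,y))` as a polynomial in `Y` over `k(x)`. -/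
def kernelAtX (St : Finset (ℤ × ℤ)) (w : ℤ × ℤ → ℂ) (mx my : ℕ) (x y : K) :
    Polynomial ↥(kxF St w x y) :=
  MvPolynomial.aeval
    ![Polynomial.C (⟨x, x_mem_kxF St w x y⟩ : kxF St w x y), Polynomial.X,
      Polynomial.C (⟨(stepEval St w x y)⁻¹, inv_mem (S_mem_kxF St w x y)⟩ : kxF St w x y)]
    (kernelPoly St w mx my)

/-- The specialization `K̃(X, y, 1/S(x,y))` as a polynomial in `X` over `k(y)`. -/
def kernelAtY (St : Finset (ℤ × ℤ)) (w : ℤ × ℤ → ℂ) (mx my : ℕ) (x y : K) :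
    Polynomial ↥(kyF St w x y) :=
  MvPolynomial.aeval
    ![Polynomial.X, Polynomial.C (⟨y, y_mem_kyF St w x y⟩ : kyF St w x y),
      Polynomial.C (⟨(stepEval St w x y)⁻¹, inv_mem (S_mem_kyF St w x y)⟩ : kyF St w x y)]
    (kernelPoly St w mx my)

/-- Values of regular fractions with numerator and denominator supported on a set
of variables. -/
def regRange (St : Finset (ℤ × ℤ)) (w : ℤ × ℤ → ℂ) (x y : K) (mx my : ℕ)
    (s : Set (Fin 3)) : Set K :=
  {z | ∃ A B : MvPolynomial (Fin 3) ℂ,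
    A ∈ MvPolynomial.supported ℂ s ∧ B ∈ MvPolynomial.supported ℂ s ∧
    ¬ kernelPoly St w mx my ∣ B ∧ z = evalXY St w x y A / evalXY St w x y B}

end QuadrantWalk

/-!
Over `k(x)`, `y` is a root of the Laurent polynomial `S(x, Y) - S(x, y)`, which is nonzero
because `S` involves `Y` and `x` is transcendental; so `𝕂`, algebraic over `ℂ(x, y)`, is
algebraic over `k(x)`, and symmetrically over `k(y)`. Being algebraically closed, `𝕂` is then
an algebraic closure of each base field `L`. An `L`-embedding `σ` of `𝕂` fixes `S(x, y)` and
`x` or `y`, so `(σ x, σ y)` is adjacent to `(x, y)`; as `σ` preserves adjacency, it maps the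
orbit into itself and hence `k(𝒪)` into itself. Thus `k(𝒪)` is normal over `L`, and separable
in characteristic zero.
-/

namespace QuadrantWalk

section LaurentRoots

theorem _root_.Transcendental.ne_zero {R A : Type*} [CommRing R] [Nontrivial R] [Ring A]
    [Algebra R A] {u : A} (hu : Transcendental R u) : u ≠ 0 :=
  fun h => hu (h ▸ isAlgebraic_zero)

variable {E A : Type*} [Field E] [Field A] [Algebra E A]

theorem isAlgebraic_of_sum_zpow_eq_zero {v : A} (hv : v ≠ 0) {T : Finset ℤ} {a : ℤ → E}
    (ha : ∃ j ∈ T, a j ≠ 0) (hroot : ∑ j ∈ T, algebraMap E A (a j) * v ^ j = 0) :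
    IsAlgebraic E v := by
  obtain ⟨m, hm⟩ : ∃ m : ℕ, ∀ j ∈ T, 0 ≤ j + m :=
    ⟨T.sup fun j => (-j).toNat, fun j hj => by
      have := Finset.le_sup (f := fun j : ℤ => (-j).toNat) hj
      omega⟩
  obtain ⟨j₀, hj₀, ha₀⟩ := ha
  let P : Polynomial E := ∑ j ∈ T, Polynomial.C (a j) * Polynomial.X ^ (j + m).toNat
  have hcoeff : P.coeff (j₀ + m).toNat = a j₀ := by
    rw [Polynomial.finsetSum_coeff, Finset.sum_eq_single_of_mem j₀ hj₀]
    · simp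
    · intro j hj hne
      have := hm j hj
      have := hm j₀ hj₀
      rw [Polynomial.coeff_C_mul_X_pow, if_neg (by omega)]
  refine ⟨P, fun hP => ha₀ (by rw [← hcoeff, hP, Polynomial.coeff_zero]), ?_⟩
  calc Polynomial.aeval v P
      = ∑ j ∈ T, algebraMap E A (a j) * v ^ j * v ^ (m : ℤ) := by
        simp only [P, map_sum, map_mul, map_pow, Polynomial.aeval_C, Polynomial.aeval_X]
        refine Finset.sum_congr rfl fun j hj => ?_
        rw [mul_assoc, ← zpow_add₀ hv, ← zpow_natCast, Int.toNat_of_nonneg (hm j hj)]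
    _ = 0 := by rw [← Finset.sum_mul, hroot, zero_mul]

theorem sum_zpow_ne_zero_of_transcendental {u : A} (hu : Transcendental E u) {T : Finset ℤ}
    {c : ℤ → E} (hc : ∃ i ∈ T, c i ≠ 0) : ∑ i ∈ T, algebraMap E A (c i) * u ^ i ≠ 0 :=
  fun h => hu (isAlgebraic_of_sum_zpow_eq_zero hu.ne_zero hc h)

end LaurentRoots

section StepPolynomial

variable {K : Type} [Field K] [Algebra ℂ K] (St : Finset (ℤ × ℤ)) (w : ℤ × ℤ → ℂ)

theorem stepEval_eq_sum_fiber {T : Finset ℤ} (hT : ∀ p ∈ St, p.2 ∈ T) (u v : K) :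
    stepEval St w u v =
      ∑ j ∈ T, (∑ q ∈ St with q.2 = j, algebraMap ℂ K (w q) * u ^ q.1) * v ^ j := by
  rw [stepEval, ← Finset.sum_fiberwise_of_maps_to hT]
  refine Finset.sum_congr rfl fun j _ => ?_
  rw [Finset.sum_mul]
  refine Finset.sum_congr rfl fun q hq => ?_
  rw [(Finset.mem_filter.1 hq).2]

theorem stepEval_swap (u v : K) :
    stepEval (St.image Prod.swap) (fun p => w p.swap) v u = stepEval St w u v := by
  rw [stepEval, Finset.sum_image fun p _ q _ h => Prod.swap_injective h]
  exact Finset.sum_congr rfl fun q _ => by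
    simp only [Prod.swap_swap, Prod.fst_swap, Prod.snd_swap]
    ring

theorem map_stepEval {L : Type} [Field L] [Algebra ℂ L] (σ : K →ₐ[ℂ] L) (u v : K) :
    σ (stepEval St w u v) = stepEval St w (σ u) (σ v) := by
  simp only [stepEval, map_sum, map_mul, AlgHom.commutes, map_zpow₀]

variable {St w}

theorem sum_filter_snd_ne_zero (hw : ∀ p ∈ St, w p ≠ 0) {u : K} (hu : Transcendental ℂ u)
    {p : ℤ × ℤ} (hp : p ∈ St) :
    ∑ q ∈ St with q.2 = p.2, algebraMap ℂ K (w q) * u ^ q.1 ≠ 0 := by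
  have hfiber : ∀ q ∈ St.filter (·.2 = p.2), (q.1, p.2) = q := fun q hq =>
    Prod.ext rfl (Finset.mem_filter.1 hq).2.symm
  calc ∑ q ∈ St with q.2 = p.2, algebraMap ℂ K (w q) * u ^ q.1
      = ∑ i ∈ (St.filter (·.2 = p.2)).image Prod.fst, algebraMap ℂ K (w (i, p.2)) * u ^ i := by
        rw [Finset.sum_image fun q hq r hr h => by rw [← hfiber q hq, ← hfiber r hr, h]]
        exact Finset.sum_congr rfl fun q hq => by rw [hfiber q hq]
    _ ≠ 0 := sum_zpow_ne_zero_of_transcendental hu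
        ⟨p.1, Finset.mem_image_of_mem _ (Finset.mem_filter.2 ⟨hp, rfl⟩), hw p hp⟩

theorem isAlgebraic_snd_of_stepEval_mem (hw : ∀ p ∈ St, w p ≠ 0)
    (hY : ∃ p ∈ St, ∃ q ∈ St, p.2 ≠ q.2) {u v : K} (hu : Transcendental ℂ u) (hv : v ≠ 0)
    {E : IntermediateField ℂ K} (huE : u ∈ E) (hsE : stepEval St w u v ∈ E) :
    IsAlgebraic E v := by
  obtain ⟨p, hp, hp0⟩ : ∃ p ∈ St, p.2 ≠ 0 := by
    obtain ⟨p, hp, q, hq, hpq⟩ := hY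
    by_cases h : p.2 = 0
    · exact ⟨q, hq, fun h' => hpq (h.trans h'.symm)⟩
    · exact ⟨p, hp, h⟩
  let T := insert 0 (St.image Prod.snd)
  have hT : ∀ q ∈ St, q.2 ∈ T := fun q hq =>
    Finset.mem_insert_of_mem (Finset.mem_image_of_mem _ hq)
  -- `v` is a root of the Laurent polynomial `S(u, Y) - S(u, v)` over `E`
  let a : ℤ → E := fun j =>
    ⟨(∑ q ∈ St with q.2 = j, algebraMap ℂ K (w q) * u ^ q.1) -
        if j = 0 then stepEval St w u v else 0,
      sub_mem (sum_mem fun q _ => mul_mem (E.algebraMap_mem _) (zpow_mem huE _))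
        (by split_ifs; exacts [hsE, zero_mem _])⟩
  refine isAlgebraic_of_sum_zpow_eq_zero hv (T := T) (a := a) ⟨p.2, hT p hp, fun h => ?_⟩ ?_
  · have h' := congrArg Subtype.val h
    simp only [a, if_neg hp0, sub_zero, ZeroMemClass.coe_zero] at h'
    exact sum_filter_snd_ne_zero hw hu hp h'
  · change ∑ j ∈ T, ((∑ q ∈ St with q.2 = j, algebraMap ℂ K (w q) * u ^ q.1) -
        if j = 0 then stepEval St w u v else 0) * v ^ j = 0
    have h0T : (0 : ℤ) ∈ T := Finset.mem_insert_self _ _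
    simp only [sub_mul, Finset.sum_sub_distrib, ← stepEval_eq_sum_fiber St w hT, ite_mul,
      zero_mul, Finset.sum_ite_eq', if_pos h0T, zpow_zero, mul_one, sub_self]

theorem isAlgebraic_fst_of_stepEval_mem (hw : ∀ p ∈ St, w p ≠ 0)
    (hX : ∃ p ∈ St, ∃ q ∈ St, p.1 ≠ q.1) {u v : K} (hv : Transcendental ℂ v) (hu : u ≠ 0)
    {E : IntermediateField ℂ K} (hvE : v ∈ E) (hsE : stepEval St w u v ∈ E) :
    IsAlgebraic E u := by
  obtain ⟨p, hp, q, hq, hpq⟩ := hX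
  refine isAlgebraic_snd_of_stepEval_mem (St := St.image Prod.swap) (w := fun p => w p.swap)
    ?_ ⟨p.swap, Finset.mem_image_of_mem _ hp, q.swap, Finset.mem_image_of_mem _ hq, hpq⟩
    hv hu hvE (by rwa [stepEval_swap])
  intro p' hp'
  obtain ⟨p, hp, rfl⟩ := Finset.mem_image.1 hp'
  simpa using hw p hp

end StepPolynomial

section Orbit

variable {K : Type} [Field K] [Algebra ℂ K] {St : Finset (ℤ × ℤ)} {w : ℤ × ℤ → ℂ} {x y : K}

theorem Adj.map (σ : K →ₐ[ℂ] K) {a b : K × K} (h : Adj St w a b) :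
    Adj St w (Prod.map σ σ a) (Prod.map σ σ b) := by
  rcases h with ⟨h1, h2⟩ | ⟨h1, h2⟩
  · exact Or.inl ⟨congrArg σ h1, by simp only [Prod.map_fst, Prod.map_snd, ← map_stepEval, h2]⟩
  · exact Or.inr ⟨congrArg σ h1, by simp only [Prod.map_fst, Prod.map_snd, ← map_stepEval, h2]⟩

theorem map_mem_orbit (σ : K →ₐ[ℂ] K) (hσ : (σ x, σ y) ∈ orbit St w x y) {a : K × K}
    (ha : a ∈ orbit St w x y) : Prod.map σ σ a ∈ orbit St w x y :=
  hσ.trans (ha.lift (Prod.map σ σ) fun _ _ h => h.map σ)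

theorem map_mem_orbit_self (σ : K →ₐ[ℂ] K) (hs : σ (stepEval St w x y) = stepEval St w x y)
    (hxy : σ x = x ∨ σ y = y) : (σ x, σ y) ∈ orbit St w x y := by
  have hS : stepEval St w x y = stepEval St w (σ x) (σ y) := by rw [← map_stepEval, hs]
  exact .single (hxy.imp (fun h => ⟨h.symm, hS⟩) fun h => ⟨h.symm, hS⟩)

theorem orbitF_map_le (σ : K →ₐ[ℂ] K) (hs : σ (stepEval St w x y) = stepEval St w x y)
    (hσ : (σ x, σ y) ∈ orbit St w x y) : (orbitF St w x y).map σ ≤ orbitF St w x y := by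
  rw [orbitF, adjoin_map]
  refine adjoin_le_iff.2 ?_
  rintro _ ⟨z, hz | ⟨a, ha, rfl | rfl⟩, rfl⟩
  · rw [Set.mem_singleton_iff.1 hz, hs]
    exact S_mem_orbitF St w x y
  · exact subset_adjoin _ _ (Or.inr ⟨_, map_mem_orbit σ hσ ha, Or.inl rfl⟩)
  · exact subset_adjoin _ _ (Or.inr ⟨_, map_mem_orbit σ hσ ha, Or.inr rfl⟩)

theorem isGalois_orbitF [IsAlgClosed K] {L : IntermediateField ℂ K} [Algebra.IsAlgebraic L K]
    (hs : stepEval St w x y ∈ L) (hxy : x ∈ L ∨ y ∈ L) (hle : L ≤ orbitF St w x y) :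
    IsGalois L (extendScalars hle) := by
  have : IsAlgClosure L K := ⟨‹_›, ‹_›⟩
  have hnormal : Normal L (extendScalars hle) := normal_iff_forall_map_le.2 fun σ => by
    let τ : K →ₐ[ℂ] K := σ.restrictScalars ℂ
    have hfix : ∀ z ∈ L, τ z = z := fun z hz => σ.commutes ⟨z, hz⟩
    have hτ := orbitF_map_le τ (hfix _ hs)
      (map_mem_orbit_self τ (hfix _ hs) (hxy.imp (hfix x) (hfix y)))
    rintro _ ⟨z, hz, rfl⟩
    exact hτ ⟨z, hz, rfl⟩
  exact isGalois_iff.2 ⟨inferInstance, hnormal⟩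

end Orbit

section Fields

theorem _root_.IntermediateField.isAlgebraic_of_le_adjoin_simple {F E : Type*} [Field F]
    [Field E] [Algebra F E] {L M : IntermediateField F E} [Algebra.IsAlgebraic M E] {z : E}
    (hz : IsAlgebraic L z) (hle : M ≤ (adjoin L {z}).restrictScalars F) :
    Algebra.IsAlgebraic L E := by
  have : Algebra.IsAlgebraic L (adjoin L {z}) := isAlgebraic_adjoin_simple hz.isIntegral
  have : Algebra.IsAlgebraic (adjoin L {z}) E :=
    ⟨fun t => (Algebra.IsAlgebraic.isAlgebraic (R := M) t).tower_top_of_subalgebra_le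
      (B := ((adjoin L {z}).restrictScalars F).toSubalgebra) hle⟩
  exact .trans L (adjoin L {z}) E

variable {K : Type} [Field K] [Algebra ℂ K] (St : Finset (ℤ × ℤ)) (w : ℤ × ℤ → ℂ) (x y : K)

theorem x_mem_kxyF : x ∈ kxyF x y := subset_adjoin ℂ _ (Set.mem_insert _ _)

theorem y_mem_kxyF : y ∈ kxyF x y := subset_adjoin ℂ _ (Set.mem_insert_of_mem _ rfl)

theorem S_mem_kxyF : stepEval St w x y ∈ kxyF x y :=
  sum_mem fun p _ => mul_mem (mul_mem ((kxyF x y).algebraMap_mem (w p))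
    (zpow_mem (x_mem_kxyF x y) p.1)) (zpow_mem (y_mem_kxyF x y) p.2)

theorem kxF_le_orbitF : kxF St w x y ≤ orbitF St w x y :=
  adjoin_le_iff.2 <| Set.insert_subset_iff.2
    ⟨x_mem_orbitF St w x y, Set.singleton_subset_iff.2 (S_mem_orbitF St w x y)⟩

theorem kyF_le_orbitF : kyF St w x y ≤ orbitF St w x y :=
  adjoin_le_iff.2 <| Set.insert_subset_iff.2
    ⟨y_mem_orbitF St w x y, Set.singleton_subset_iff.2 (S_mem_orbitF St w x y)⟩

theorem kxyF_le_orbitF : kxyF x y ≤ orbitF St w x y :=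
  adjoin_le_iff.2 <| Set.insert_subset_iff.2
    ⟨x_mem_orbitF St w x y, Set.singleton_subset_iff.2 (y_mem_orbitF St w x y)⟩

variable {St w x y}

theorem Setting.transcendental_fst (hset : Setting St w x y) : Transcendental ℂ x := by
  simpa using hset.indep.transcendental 0

theorem Setting.transcendental_snd (hset : Setting St w x y) : Transcendental ℂ y := by
  simpa using hset.indep.transcendental 1

theorem Setting.isAlgebraic_kxF (hset : Setting St w x y) :
    Algebra.IsAlgebraic (kxF St w x y) K := by
  have := hset.algebraic
  have hy : IsAlgebraic (kxF St w x y) y :=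
    isAlgebraic_snd_of_stepEval_mem hset.weight_ne hset.notUniv.2 hset.transcendental_fst
      hset.transcendental_snd.ne_zero (x_mem_kxF St w x y) (S_mem_kxF St w x y)
  refine isAlgebraic_of_le_adjoin_simple (M := kxyF x y) hy <| adjoin_le_iff.2 <|
    Set.insert_subset_iff.2 ⟨?_, Set.singleton_subset_iff.2 (mem_adjoin_simple_self _ y)⟩
  exact (adjoin (kxF St w x y) {y}).algebraMap_mem ⟨x, x_mem_kxF St w x y⟩

theorem Setting.isAlgebraic_kyF (hset : Setting St w x y) :
    Algebra.IsAlgebraic (kyF St w x y) K := by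
  have := hset.algebraic
  have hx : IsAlgebraic (kyF St w x y) x :=
    isAlgebraic_fst_of_stepEval_mem hset.weight_ne hset.notUniv.1 hset.transcendental_snd
      hset.transcendental_fst.ne_zero (y_mem_kyF St w x y) (S_mem_kyF St w x y)
  refine isAlgebraic_of_le_adjoin_simple (M := kxyF x y) hx <| adjoin_le_iff.2 <|
    Set.insert_subset_iff.2 ⟨mem_adjoin_simple_self _ x, Set.singleton_subset_iff.2 ?_⟩
  exact (adjoin (kyF St w x y) {x}).algebraMap_mem ⟨y, y_mem_kyF St w x y⟩

end Fields

/-- the extensions `k(𝒪)|k(x)`, `k(𝒪)|k(y)` and `k(𝒪)|k(x,y)` are Galois. -/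
theorem stmt5 {K : Type} [Field K] [Algebra ℂ K]
    (St : Finset (ℤ × ℤ)) (w : ℤ × ℤ → ℂ) (x y : K)
    (hset : Setting St w x y) :
    ∃ (h1 : kxF St w x y ≤ orbitF St w x y)
      (h2 : kyF St w x y ≤ orbitF St w x y)
      (h3 : kxyF x y ≤ orbitF St w x y),
      IsGalois ↥(kxF St w x y) ↥(extendScalars h1) ∧
      IsGalois ↥(kyF St w x y) ↥(extendScalars h2) ∧
      IsGalois ↥(kxyF x y) ↥(extendScalars h3) := by
  have := hset.algClosed
  have := hset.algebraic
  have := hset.isAlgebraic_kxF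
  have := hset.isAlgebraic_kyF
  exact ⟨kxF_le_orbitF St w x y, kyF_le_orbitF St w x y, kxyF_le_orbitF St w x y,
    isGalois_orbitF (S_mem_kxF St w x y) (.inl (x_mem_kxF St w x y)) _,
    isGalois_orbitF (S_mem_kyF St w x y) (.inr (y_mem_kyF St w x y)) _,
    isGalois_orbitF (S_mem_kxyF St w x y) (.inl (x_mem_kxyF x y)) _⟩

end QuadrantWalk
end
end

section
/- Let α be a 0-chain of the orbit. The following are equivalent: (1) α cancels decoupled fractions; (2) ε^x(α) = 0 and ε^y(α) = 0, i.e. the sum of the coefficients of α over every x-clique is zero and over every y-clique is zero; (3) there exists a 1-cycle c of the orbit graph with α = ∂^x(c); (3') there exists a 1-cycle c of the orbit graph with α = ∂^y(c). -/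
open IntermediateField
open scoped BigOperators Classical

set_option synthInstance.maxHeartbeats 1000000
set_option maxHeartbeats 1600000

noncomputable section

/-! On the orbit `S(u, v)` is constant, so the `x`-cliques (resp. `y`-cliques) are the fibres of
the first (resp. second) coordinate, and a decoupled fraction `F(X,t) + G(Y,t)` evaluates at
`(u, v)` to a function of `u` plus a function of `v`. Hence `α` cancels decoupled fractions iff
its pushforwards along both projections vanish: sufficiency is a fibrewise sum, and necessity
follows by testing `X^n` and `Y^n` (regular because `K̃` is not a unit), since a finitely
supported measure on a field is determined by its moments. The vanishing of both pushforwards is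
the clique condition. Joining each point of `α` to a fixed representative of its `x`-clique and
of its `y`-clique gives a `1`-cycle with `x`-boundary `α` (its negative has `y`-boundary `α`);
conversely a boundary of `x`-edges has zero `x`-clique sums. -/

section Moments

variable {F K : Type*} [Field F] [Field K] [Algebra F K]

theorem Finsupp.sum_algebraMap_mul_eval_eq_zero {β : K →₀ F}
    (hβ : ∀ n : ℕ, (β.sum fun u c => algebraMap F K c * u ^ n) = 0) (P : Polynomial K) :
    (β.sum fun u c => algebraMap F K c * P.eval u) = 0 := by
  induction P using Polynomial.induction_on' with
  | add P Q hP hQ => simp only [Polynomial.eval_add, mul_add, Finsupp.sum_add, hP, hQ, add_zero]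
  | monomial n a =>
    simp only [Polynomial.eval_monomial, mul_left_comm _ a, ← Finsupp.mul_sum, hβ n, mul_zero]

/-- Test against the Lagrange basis polynomials of the support. -/
theorem Finsupp.eq_zero_of_moments_eq_zero {β : K →₀ F}
    (hβ : ∀ n : ℕ, (β.sum fun u c => algebraMap F K c * u ^ n) = 0) : β = 0 := by
  ext u
  by_contra hu
  have hmem : u ∈ β.support := Finsupp.mem_support_iff.2 hu
  have key := Finsupp.sum_algebraMap_mul_eval_eq_zero hβ (Lagrange.basis β.support id u)
  rw [Finsupp.sum, Finset.sum_eq_single_of_mem u hmem] at key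
  · have hself : (Lagrange.basis β.support id u).eval u = 1 :=
      Lagrange.eval_basis_self (v := id) (Set.injOn_id _) hmem
    rw [hself, mul_one, map_eq_zero_iff _ (algebraMap F K).injective] at key
    exact hu key
  · intro v hv hvu
    have hother : (Lagrange.basis β.support id u).eval v = 0 :=
      Lagrange.eval_basis_of_ne (v := id) (Ne.symm hvu) hv
    rw [hother, mul_zero]

end Moments

section Fibers

variable {ι β : Type*}

theorem Finsupp.forall_sum_ite_eq_zero_iff_mapDomain_eq_zero {M : Type*} [AddCommMonoid M]
    {O : Set ι} {P : ι → ι → Prop} {f : ι → β} (hP : ∀ a ∈ O, ∀ b ∈ O, P a b ↔ f a = f b)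
    {α : ι →₀ M} (hα : ↑α.support ⊆ O) :
    (∀ b ∈ O, (α.sum fun a c => if P a b then c else 0) = 0) ↔ α.mapDomain f = 0 := by
  have hfiber : ∀ b ∈ O, (α.sum fun a c => if P a b then c else 0) = α.mapDomain f (f b) := by
    intro b hb
    rw [Finsupp.mapDomain_apply_eq_sum, Finset.sum_filter, Finsupp.sum]
    exact Finset.sum_congr rfl fun a ha => if_congr (hP a (hα ha) b hb) rfl rfl
  refine ⟨fun h => ?_, fun h b hb => by rw [hfiber b hb, h, Finsupp.zero_apply]⟩
  ext u
  by_contra hu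
  obtain ⟨a, ha, rfl⟩ :=
    Finset.mem_image.1 (Finsupp.mapDomain_support (Finsupp.mem_support_iff.2 hu))
  exact hu ((hfiber a (hα ha)).symm.trans (h a (hα ha)))

theorem Finsupp.sum_mapDomain_algebraMap_mul {R A : Type*} [CommSemiring R] [Semiring A]
    [Algebra R A] (f : ι → β) (α : ι →₀ R) (F : β → A) :
    ((α.mapDomain f).sum fun u c => algebraMap R A c * F u) =
      α.sum fun a c => algebraMap R A c * F (f a) :=
  Finsupp.sum_mapDomain_index (fun _ => by simp) (fun _ _ _ => by simp [add_mul])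

end Fibers

theorem MvPolynomial.aeval_congr_of_mem_supported {σ R S : Type*} [CommSemiring R]
    [CommSemiring S] [Algebra R S] {s : Set σ} {p : MvPolynomial σ R}
    (hp : p ∈ MvPolynomial.supported R s) {f g : σ → S} (h : ∀ i ∈ s, f i = g i) :
    MvPolynomial.aeval f p = MvPolynomial.aeval g p :=
  MvPolynomial.hom_congr_vars (f₁ := (MvPolynomial.aeval f).toRingHom)
    (f₂ := (MvPolynomial.aeval g).toRingHom) (by ext; simp)
    (fun i hi _ => by simpa using h i (MvPolynomial.mem_supported.1 hp hi)) rfl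

section Boundary

variable {ι : Type*} (R : Type*) [CommRing R]

/-- A pair `(a, b)` is an edge oriented from `a` to `b` when `P a b`; other pairs have boundary
`0`. -/
def edgeBoundary (P : ι → ι → Prop) : ((ι × ι) →₀ R) →ₗ[R] ι →₀ R :=
  Finsupp.linearCombination R fun e =>
    if P e.1 e.2 then Finsupp.single e.2 1 - Finsupp.single e.1 1 else 0

variable {R}

theorem edgeBoundary_mapDomain {P : ι → ι → Prop} (g : ι → ι × ι) (α : ι →₀ R) :
    edgeBoundary R P (α.mapDomain g) = α.sum fun a c =>
      if P (g a).1 (g a).2 then Finsupp.single (g a).2 c - Finsupp.single (g a).1 c else 0 := by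
  rw [edgeBoundary, Finsupp.linearCombination_mapDomain, Finsupp.linearCombination_apply]
  refine Finsupp.sum_congr fun a _ => ?_
  by_cases h : P (g a).1 (g a).2 <;> simp [h, smul_sub]

theorem mapDomain_edgeBoundary_eq_zero {β : Type*} {P : ι → ι → Prop} {f : ι → β}
    (hP : ∀ a b, P a b → f a = f b) (c : (ι × ι) →₀ R) :
    (edgeBoundary R P c).mapDomain f = 0 := by
  have hedge : (Finsupp.lmapDomain R R f ∘ fun e : ι × ι =>
      if P e.1 e.2 then Finsupp.single e.2 (1 : R) - Finsupp.single e.1 1 else 0) = 0 := by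
    funext e
    by_cases h : P e.1 e.2
    · simp [h, Finsupp.mapDomain_sub, hP _ _ h]
    · simp [h]
  rw [← Finsupp.lmapDomain_apply R R, edgeBoundary, Finsupp.apply_linearCombination, hedge,
    Finsupp.linearCombination_zero_apply]

theorem edgeBoundary_mapDomain_retract {P : ι → ι → Prop} {ρ : ι → ι} {α : ι →₀ R}
    (hP : ∀ a ∈ α.support, P (ρ a) a) (hρ : α.mapDomain ρ = 0) :
    edgeBoundary R P (α.mapDomain fun a => (ρ a, a)) = α := by
  rw [edgeBoundary_mapDomain]
  calc _ = α.sum (fun a c => Finsupp.single a c - Finsupp.single (ρ a) c) :=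
        Finsupp.sum_congr fun a ha => if_pos (hP a ha)
    _ = α - α.mapDomain ρ := by rw [Finsupp.sum_sub, Finsupp.sum_single]; rfl
    _ = α := by rw [hρ, sub_zero]

theorem edgeBoundary_mapDomain_retract_eq_zero {Q : ι → ι → Prop} {ρ : ι → ι} {α : ι →₀ R}
    (hQ : ∀ a ∈ α.support, Q (ρ a) a → ρ a = a) :
    edgeBoundary R Q (α.mapDomain fun a => (ρ a, a)) = 0 := by
  rw [edgeBoundary_mapDomain]
  refine Finset.sum_eq_zero fun a ha => ?_
  dsimp only
  split_ifs with h
  · rw [hQ a ha h, sub_self]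
  · rfl

/-- The cycle joins every point of the support to a chosen representative of each of its two
cliques. -/
theorem exists_cycle_of_mapDomain_eq_zero {A B : Type*} {O : Set (A × B)}
    {P Q : A × B → A × B → Prop} (hP : ∀ a ∈ O, ∀ b ∈ O, P a b ↔ a.1 = b.1)
    (hQ : ∀ a ∈ O, ∀ b ∈ O, Q a b ↔ a.2 = b.2) {α : A × B →₀ R} (hα : ↑α.support ⊆ O)
    (hfst : α.mapDomain Prod.fst = 0) (hsnd : α.mapDomain Prod.snd = 0) :
    ∃ c : ((A × B) × (A × B)) →₀ R,
      (∀ e ∈ c.support, e.1 ∈ O ∧ e.2 ∈ O ∧ (P e.1 e.2 ∨ Q e.1 e.2)) ∧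
      edgeBoundary R P c + edgeBoundary R Q c = 0 ∧ edgeBoundary R P c = α := by
  rcases isEmpty_or_nonempty (A × B) with _ | _
  · exact ⟨0, by simp, by simp, by simp [Subsingleton.elim α 0]⟩
  set ρ₁ : A × B → A × B := Function.invFunOn Prod.fst O ∘ Prod.fst
  set ρ₂ : A × B → A × B := Function.invFunOn Prod.snd O ∘ Prod.snd
  have hρ₁ : ∀ a ∈ O, ρ₁ a ∈ O ∧ P (ρ₁ a) a ∧ (Q (ρ₁ a) a → ρ₁ a = a) := fun a ha => by
    have hmem : ρ₁ a ∈ O := Function.invFunOn_mem ⟨a, ha, rfl⟩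
    have hfst : (ρ₁ a).1 = a.1 := Function.invFunOn_eq ⟨a, ha, rfl⟩
    exact ⟨hmem, (hP _ hmem _ ha).2 hfst, fun hq => Prod.ext hfst ((hQ _ hmem _ ha).1 hq)⟩
  have hρ₂ : ∀ a ∈ O, ρ₂ a ∈ O ∧ Q (ρ₂ a) a ∧ (P (ρ₂ a) a → ρ₂ a = a) := fun a ha => by
    have hmem : ρ₂ a ∈ O := Function.invFunOn_mem ⟨a, ha, rfl⟩
    have hsnd : (ρ₂ a).2 = a.2 := Function.invFunOn_eq ⟨a, ha, rfl⟩
    exact ⟨hmem, (hQ _ hmem _ ha).2 hsnd, fun hp => Prod.ext ((hP _ hmem _ ha).1 hp) hsnd⟩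
  set c₁ := α.mapDomain fun a => (ρ₁ a, a)
  set c₂ := α.mapDomain fun a => (ρ₂ a, a)
  have hP₁ : edgeBoundary R P c₁ = α :=
    edgeBoundary_mapDomain_retract (fun a ha => (hρ₁ a (hα ha)).2.1)
      (by rw [Finsupp.mapDomain_comp, hfst, Finsupp.mapDomain_zero])
  have hQ₂ : edgeBoundary R Q c₂ = α :=
    edgeBoundary_mapDomain_retract (fun a ha => (hρ₂ a (hα ha)).2.1)
      (by rw [Finsupp.mapDomain_comp, hsnd, Finsupp.mapDomain_zero])
  have hQ₁ : edgeBoundary R Q c₁ = 0 :=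
    edgeBoundary_mapDomain_retract_eq_zero fun a ha => (hρ₁ a (hα ha)).2.2
  have hP₂ : edgeBoundary R P c₂ = 0 :=
    edgeBoundary_mapDomain_retract_eq_zero fun a ha => (hρ₂ a (hα ha)).2.2
  refine ⟨c₁ - c₂, fun e he => ?_, by simp [hP₁, hP₂, hQ₁, hQ₂], by simp [hP₁, hP₂]⟩
  rcases Finset.mem_union.1 (Finsupp.support_sub he) with he | he
  · obtain ⟨a, ha, rfl⟩ := Finset.mem_image.1 (Finsupp.mapDomain_support he)
    exact ⟨(hρ₁ a (hα ha)).1, hα ha, Or.inl (hρ₁ a (hα ha)).2.1⟩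
  · obtain ⟨a, ha, rfl⟩ := Finset.mem_image.1 (Finsupp.mapDomain_support he)
    exact ⟨(hρ₂ a (hα ha)).1, hα ha, Or.inr (hρ₂ a (hα ha)).2.1⟩

end Boundary

namespace QuadrantWalk

open MvPolynomial

section Kernel

variable {St : Finset (ℤ × ℤ)} {w : ℤ × ℤ → ℂ} {mx my : ℕ}

/-- `X^mx Y^my S(X,Y)`. -/
def stepPart (St : Finset (ℤ × ℤ)) (w : ℤ × ℤ → ℂ) (mx my : ℕ) : MvPolynomial (Fin 3) ℂ :=
  ∑ p ∈ St, C (w p) * X 0 ^ (p.1 + (mx : ℤ)).toNat * X 1 ^ (p.2 + (my : ℤ)).toNat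

theorem kernelPoly_eq :
    kernelPoly St w mx my = X 0 ^ mx * X 1 ^ my - X 2 * stepPart St w mx my := rfl

theorem stepPart_mem_supported : stepPart St w mx my ∈ supported ℂ ({0, 1} : Set (Fin 3)) :=
  Subalgebra.sum_mem _ fun _ _ =>
    mul_mem (mul_mem (Subalgebra.algebraMap_mem _ _) (pow_mem (X_mem_supported.2 (by simp)) _))
      (pow_mem (X_mem_supported.2 (by simp)) _)

theorem coeff_stepPart (hX : ∀ p ∈ St, -(mx : ℤ) ≤ p.1) (hY : ∀ p ∈ St, -(my : ℤ) ≤ p.2)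
    {p : ℤ × ℤ} (hp : p ∈ St) :
    coeff (Finsupp.single 0 (p.1 + (mx : ℤ)).toNat + Finsupp.single 1 (p.2 + (my : ℤ)).toNat)
      (stepPart St w mx my) = w p := by
  have hmonomial : ∀ q : ℤ × ℤ,
      (C (w q) * X 0 ^ (q.1 + (mx : ℤ)).toNat * X 1 ^ (q.2 + (my : ℤ)).toNat :
        MvPolynomial (Fin 3) ℂ) =
      monomial (Finsupp.single 0 (q.1 + (mx : ℤ)).toNat +
        Finsupp.single 1 (q.2 + (my : ℤ)).toNat) (w q) := by
    intro q
    rw [C_mul_X_pow_eq_monomial, X_pow_eq_monomial, monomial_mul, mul_one]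
  simp only [stepPart, hmonomial, coeff_sum, coeff_monomial]
  rw [Finset.sum_eq_single_of_mem p hp, if_pos rfl]
  intro q hq hqp
  refine if_neg fun heq => hqp ?_
  have h0 := DFunLike.congr_fun heq 0
  have h1 := DFunLike.congr_fun heq 1
  simp only [Finsupp.coe_add, Pi.add_apply, Finsupp.single_eq_same, ne_eq, zero_ne_one,
    one_ne_zero, not_false_eq_true, Finsupp.single_eq_of_ne, add_zero, zero_add] at h0 h1
  -- the lower bounds make `toNat` injective on the shifted exponents
  have := hX p hp; have := hX q hq; have := hY p hp; have := hY q hq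
  exact Prod.ext (by omega) (by omega)

theorem stepPart_ne_zero (hw : ∀ p ∈ St, w p ≠ 0) (hne : St.Nonempty)
    (hX : ∀ p ∈ St, -(mx : ℤ) ≤ p.1) (hY : ∀ p ∈ St, -(my : ℤ) ≤ p.2) :
    stepPart St w mx my ≠ 0 := by
  obtain ⟨p, hp⟩ := hne
  intro h
  apply hw p hp
  rw [← coeff_stepPart (w := w) hX hY hp, h, coeff_zero]

/-- `K̃` vanishes at `(z₀, z₁, z₀^mx z₁^my / stepPart(z))` for any `z`
off the zero set of `stepPart`. -/
theorem kernelPoly_not_dvd_one (hw : ∀ p ∈ St, w p ≠ 0) (hne : St.Nonempty)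
    (hX : ∀ p ∈ St, -(mx : ℤ) ≤ p.1) (hY : ∀ p ∈ St, -(my : ℤ) ≤ p.2) :
    ¬ kernelPoly St w mx my ∣ 1 := by
  obtain ⟨z, hz⟩ : ∃ z : Fin 3 → ℂ, eval z (stepPart St w mx my) ≠ 0 := by
    by_contra! h
    exact stepPart_ne_zero hw hne hX hY (MvPolynomial.funext fun z => by simpa using h z)
  set t := z 0 ^ mx * z 1 ^ my / eval z (stepPart St w mx my)
  have hpart : eval ![z 0, z 1, t] (stepPart St w mx my) = eval z (stepPart St w mx my) := by
    rw [← coe_aeval_eq_eval, ← coe_aeval_eq_eval]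
    exact aeval_congr_of_mem_supported stepPart_mem_supported (by rintro i (rfl | rfl) <;> rfl)
  have hzero : eval ![z 0, z 1, t] (kernelPoly St w mx my) = 0 := by
    simp [kernelPoly_eq, hpart, t, div_mul_cancel₀ _ hz]
  rintro ⟨q, hq⟩
  simpa [hzero] using congrArg (eval ![z 0, z 1, t]) hq

end Kernel

section Orbit

variable {K : Type} [Field K] [Algebra ℂ K] (St : Finset (ℤ × ℤ)) (w : ℤ × ℤ → ℂ) (x y : K)

theorem stepEval_eq_of_mem_orbit {a : K × K} (ha : a ∈ orbit St w x y) :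
    stepEval St w a.1 a.2 = stepEval St w x y := by
  induction ha with
  | refl => rfl
  | tail _ hadj ih => exact (hadj.elim And.right And.right).symm.trans ih

theorem xAdj_iff_of_mem_orbit : ∀ a ∈ orbit St w x y, ∀ b ∈ orbit St w x y,
    XAdj St w a b ↔ a.1 = b.1 := fun _ ha _ hb =>
  ⟨And.left, fun h => ⟨h, (stepEval_eq_of_mem_orbit St w x y ha).trans
    (stepEval_eq_of_mem_orbit St w x y hb).symm⟩⟩

theorem yAdj_iff_of_mem_orbit : ∀ a ∈ orbit St w x y, ∀ b ∈ orbit St w x y,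
    YAdj St w a b ↔ a.2 = b.2 := fun _ ha _ hb =>
  ⟨And.left, fun h => ⟨h, (stepEval_eq_of_mem_orbit St w x y ha).trans
    (stepEval_eq_of_mem_orbit St w x y hb).symm⟩⟩

theorem boundaryX_eq_edgeBoundary (c : ((K × K) × (K × K)) →₀ ℂ) :
    boundaryX St w c = edgeBoundary ℂ (XAdj St w) c := by
  simp only [boundaryX, edgeBoundary, Finsupp.linearCombination_apply, smul_ite, smul_zero]

theorem boundaryY_eq_edgeBoundary (c : ((K × K) × (K × K)) →₀ ℂ) :
    boundaryY St w c = edgeBoundary ℂ (YAdj St w) c := by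
  simp only [boundaryY, edgeBoundary, Finsupp.linearCombination_apply, smul_ite, smul_zero]

variable {St w x y}

theorem fracEval_eq_fracEval_fst {A B : MvPolynomial (Fin 3) ℂ}
    (hA : A ∈ supported ℂ ({0, 2} : Set (Fin 3))) (hB : B ∈ supported ℂ ({0, 2} : Set (Fin 3)))
    (a : K × K) : fracEval St w x y A B a = fracEval St w x y A B (a.1, 0) := by
  have hcoords : ∀ i ∈ ({0, 2} : Set (Fin 3)),
      ![a.1, a.2, (stepEval St w x y)⁻¹] i = ![a.1, 0, (stepEval St w x y)⁻¹] i := by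
    rintro i (rfl | rfl) <;> rfl
  simp only [fracEval, evalPt, aeval_congr_of_mem_supported hA hcoords,
    aeval_congr_of_mem_supported hB hcoords]

theorem fracEval_eq_fracEval_snd {A B : MvPolynomial (Fin 3) ℂ}
    (hA : A ∈ supported ℂ ({1, 2} : Set (Fin 3))) (hB : B ∈ supported ℂ ({1, 2} : Set (Fin 3)))
    (a : K × K) : fracEval St w x y A B a = fracEval St w x y A B (0, a.2) := by
  have hcoords : ∀ i ∈ ({1, 2} : Set (Fin 3)),
      ![a.1, a.2, (stepEval St w x y)⁻¹] i = ![0, a.2, (stepEval St w x y)⁻¹] i := by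
    rintro i (rfl | rfl) <;> rfl
  simp only [fracEval, evalPt, aeval_congr_of_mem_supported hA hcoords,
    aeval_congr_of_mem_supported hB hcoords]

/-- Testing against the decoupled fractions `X^n` and `Y^n` gives all moments of the
projections of `α` to the two coordinates. -/
theorem cancelsDecoupled_iff_mapDomain_eq_zero {mx my : ℕ} (hker : ¬ kernelPoly St w mx my ∣ 1)
    (α : (K × K) →₀ ℂ) :
    CancelsDecoupled St w mx my x y α ↔
      α.mapDomain Prod.fst = 0 ∧ α.mapDomain Prod.snd = 0 := by
  constructor
  · intro h
    constructor
    · refine Finsupp.eq_zero_of_moments_eq_zero fun n => ?_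
      rw [Finsupp.sum_mapDomain_algebraMap_mul]
      simpa [fracEval, evalPt] using h (X 0 ^ n) 1 0 1 (pow_mem (X_mem_supported.2 (by simp)) n)
        (one_mem _) (zero_mem _) (one_mem _) hker hker
    · refine Finsupp.eq_zero_of_moments_eq_zero fun n => ?_
      rw [Finsupp.sum_mapDomain_algebraMap_mul]
      simpa [fracEval, evalPt] using h 0 1 (X 1 ^ n) 1 (zero_mem _) (one_mem _)
        (pow_mem (X_mem_supported.2 (by simp)) n) (one_mem _) hker hker
  · rintro ⟨hfst, hsnd⟩ A₁ B₁ A₂ B₂ hA₁ hB₁ hA₂ hB₂ - -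
    simp only [fracEval_eq_fracEval_fst hA₁ hB₁, fracEval_eq_fracEval_snd hA₂ hB₂, mul_add,
      Finsupp.sum_add]
    rw [← Finsupp.sum_mapDomain_algebraMap_mul Prod.fst α (fun u => fracEval St w x y A₁ B₁ (u, 0)),
      ← Finsupp.sum_mapDomain_algebraMap_mul Prod.snd α (fun v => fracEval St w x y A₂ B₂ (0, v)),
      hfst, hsnd, Finsupp.sum_zero_index, Finsupp.sum_zero_index, add_zero]

theorem cliqueSums_eq_zero_iff {α : (K × K) →₀ ℂ} (hα : ↑α.support ⊆ orbit St w x y) :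
    ((∀ b ∈ orbit St w x y, (α.sum fun a c => if XAdj St w a b then c else 0) = 0) ∧
      (∀ b ∈ orbit St w x y, (α.sum fun a c => if YAdj St w a b then c else 0) = 0)) ↔
      α.mapDomain Prod.fst = 0 ∧ α.mapDomain Prod.snd = 0 :=
  and_congr
    (Finsupp.forall_sum_ite_eq_zero_iff_mapDomain_eq_zero (xAdj_iff_of_mem_orbit St w x y) hα)
    (Finsupp.forall_sum_ite_eq_zero_iff_mapDomain_eq_zero (yAdj_iff_of_mem_orbit St w x y) hα)

theorem exists_cycle_boundaryX_eq_iff {α : (K × K) →₀ ℂ} (hα : ↑α.support ⊆ orbit St w x y) :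
    (∃ c : ((K × K) × (K × K)) →₀ ℂ,
      (∀ e ∈ c.support, e.1 ∈ orbit St w x y ∧ e.2 ∈ orbit St w x y ∧ Adj St w e.1 e.2) ∧
      boundaryX St w c + boundaryY St w c = 0 ∧ boundaryX St w c = α) ↔
      α.mapDomain Prod.fst = 0 ∧ α.mapDomain Prod.snd = 0 := by
  simp only [boundaryX_eq_edgeBoundary, boundaryY_eq_edgeBoundary]
  constructor
  · rintro ⟨c, -, hcycle, rfl⟩
    refine ⟨mapDomain_edgeBoundary_eq_zero (fun _ _ h => h.1) c, ?_⟩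
    rw [eq_neg_of_add_eq_zero_left hcycle, ← map_neg]
    exact mapDomain_edgeBoundary_eq_zero (fun _ _ h => h.1) (-c)
  · rintro ⟨hfst, hsnd⟩
    exact exists_cycle_of_mapDomain_eq_zero (xAdj_iff_of_mem_orbit St w x y)
      (yAdj_iff_of_mem_orbit St w x y) hα hfst hsnd

theorem exists_cycle_boundaryY_eq_iff_boundaryX (α : (K × K) →₀ ℂ) :
    (∃ c : ((K × K) × (K × K)) →₀ ℂ,
      (∀ e ∈ c.support, e.1 ∈ orbit St w x y ∧ e.2 ∈ orbit St w x y ∧ Adj St w e.1 e.2) ∧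
      boundaryX St w c + boundaryY St w c = 0 ∧ boundaryY St w c = α) ↔
    (∃ c : ((K × K) × (K × K)) →₀ ℂ,
      (∀ e ∈ c.support, e.1 ∈ orbit St w x y ∧ e.2 ∈ orbit St w x y ∧ Adj St w e.1 e.2) ∧
      boundaryX St w c + boundaryY St w c = 0 ∧ boundaryX St w c = α) := by
  simp only [boundaryX_eq_edgeBoundary, boundaryY_eq_edgeBoundary]
  constructor
  · rintro ⟨c, hedges, hcycle, hα⟩
    refine ⟨-c, by simpa using hedges, by rw [map_neg, map_neg, ← neg_add, hcycle, neg_zero], ?_⟩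
    rw [map_neg, eq_neg_of_add_eq_zero_left hcycle, neg_neg, hα]
  · rintro ⟨c, hedges, hcycle, hα⟩
    refine ⟨-c, by simpa using hedges, by rw [map_neg, map_neg, ← neg_add, hcycle, neg_zero], ?_⟩
    rw [map_neg, eq_neg_of_add_eq_zero_right hcycle, neg_neg, hα]

end Orbit

/-- a `0`-chain `α` of the orbit cancels decoupled fractions iff its
coefficients sum to zero on every `x`-clique and on every `y`-clique, iff it is the
`x`-boundary (equivalently the `y`-boundary) of a `1`-cycle of the orbit graph. -/
theorem stmt15 {K : Type} [Field K] [Algebra ℂ K]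
    (St : Finset (ℤ × ℤ)) (w : ℤ × ℤ → ℂ) (x y : K) (mx my : ℕ)
    (hset : Setting St w x y) (hb : ExponentBounds St mx my)
    (α : (K × K) →₀ ℂ) (hα : ↑α.support ⊆ orbit St w x y) :
    (CancelsDecoupled St w mx my x y α ↔
      ((∀ b ∈ orbit St w x y,
          (α.sum fun a c => if XAdj St w a b then c else 0) = 0) ∧
       (∀ b ∈ orbit St w x y,
          (α.sum fun a c => if YAdj St w a b then c else 0) = 0))) ∧
    (CancelsDecoupled St w mx my x y α ↔
      ∃ c : ((K × K) × (K × K)) →₀ ℂ,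
        (∀ e ∈ c.support,
          e.1 ∈ orbit St w x y ∧ e.2 ∈ orbit St w x y ∧ Adj St w e.1 e.2) ∧
        boundaryX St w c + boundaryY St w c = 0 ∧ boundaryX St w c = α) ∧
    (CancelsDecoupled St w mx my x y α ↔
      ∃ c : ((K × K) × (K × K)) →₀ ℂ,
        (∀ e ∈ c.support,
          e.1 ∈ orbit St w x y ∧ e.2 ∈ orbit St w x y ∧ Adj St w e.1 e.2) ∧
        boundaryX St w c + boundaryY St w c = 0 ∧ boundaryY St w c = α) := by
  obtain ⟨p, hp, -⟩ := hset.notUniv.1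
  have hker : ¬ kernelPoly St w mx my ∣ 1 :=
    kernelPoly_not_dvd_one hset.weight_ne ⟨p, hp⟩ hb.lowerX hb.lowerY
  have hcancel := cancelsDecoupled_iff_mapDomain_eq_zero (x := x) (y := y) hker α
  have hcycle := hcancel.trans (exists_cycle_boundaryX_eq_iff hα).symm
  exact ⟨hcancel.trans (cliqueSums_eq_zero_iff hα).symm, hcycle,
    hcycle.trans (exists_cycle_boundaryY_eq_iff_boundaryX α).symm⟩

end QuadrantWalk
end
end
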